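/- arXiv:2602.19309 — 2 statements merged into one kernel-verified Lean document; each statement's English description precedes it below -/
import Mathlib

section
/- Let π₂ and π₂' be two player-2 policies and let ε : {1,…,H} → ℝ≥0 be such that for every even step h ≤ H and every history τ ∈ Y^{h−1}, d_TV(π₂(h,τ), π₂'(h,τ)) ≤ ε_h. Then for every player-1 policy π₁, every odd step h ≤ H, and every history τ ∈ Y^{h−1}, the value functions satisfy |V_h^{π₁,π₂'}(τ) − V_h^{π₁,π₂}(τ)| ≤ Σ_{d=0}^{⌊(H−h−1)/2⌋} ε_{h+2d+1} (the sum of the per-step total-variation errors at the even steps h+1, h+3, … up to H). -/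
/-!
Induct backwards on the history length `k`. At a player-1 node both values average the
continuation values against the same distribution, so the error bound of the next step carries
over. At a player-2 node the difference splits, by the triangle inequality, into changing the
distribution against a fixed continuation with values in `[0, 1]`, which costs at most the total
variation distance, plus averaging the continuation errors.
-/

/-- Total variation distance between two probability mass functions on a finite type. -/
noncomputable def dTV {Y : Type*} [Fintype Y] (p q : Y → ℝ) : ℝ :=
  (1 / 2) * ∑ y, |p y - q y|

/-- Value function of the alternating-move finite-horizon game with horizon `H`, reward `r` on
full trajectories, player-1 policy `π₁` (moving at histories of even length, i.e. odd steps) and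
player-2 policy `π₂` (moving at histories of odd length, i.e. even steps).  `gameValue H r π₁ π₂ k τ`
is the expected reward starting from the history `τ` of length `k` (i.e. at step `h = k + 1`). -/
noncomputable def gameValue {Y : Type*} [Fintype Y] (H : ℕ) (r : (Fin H → Y) → ℝ)
    (π₁ π₂ : (k : ℕ) → (Fin k → Y) → Y → ℝ) : (k : ℕ) → (Fin k → Y) → ℝ :=
  fun k τ =>
    if hk : k < H then
      ∑ y : Y, (if Even k then π₁ k τ y else π₂ k τ y) *
        gameValue H r π₁ π₂ (k + 1) (Fin.snoc τ y)
    else r fun i => τ (Fin.castLE (Nat.le_of_not_lt hk) i)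
  termination_by k => H - k

open Finset

section Expectation

variable {Y : Type*} [Fintype Y]

theorem abs_sum_mul_sub_sum_mul_le_dTV {p q f : Y → ℝ} (hpq : ∑ y, p y = ∑ y, q y)
    (hf : ∀ y, f y ∈ Set.Icc 0 1) :
    |∑ y, q y * f y - ∑ y, p y * f y| ≤ dTV p q := by
  -- Equal total masses let us centre `f` at `1 / 2`, where it has sup-norm at most `1 / 2`.
  have hcentre : ∑ y, q y * f y - ∑ y, p y * f y = ∑ y, (q y - p y) * (f y - 1 / 2) := by
    simp only [sub_mul, mul_sub, sum_sub_distrib, ← sum_mul, hpq]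
    ring
  rw [hcentre, dTV, mul_sum]
  refine (abs_sum_le_sum_abs _ _).trans (sum_le_sum fun y _ => ?_)
  have hfy : |f y - 1 / 2| ≤ 1 / 2 := abs_le.2 ⟨by linarith [(hf y).1], by linarith [(hf y).2]⟩
  rw [abs_mul, abs_sub_comm (q y), mul_comm (1 / 2)]
  exact mul_le_mul_of_nonneg_left hfy (abs_nonneg _)

theorem abs_sum_mul_sub_sum_mul_le {p f g : Y → ℝ} {c : ℝ} (hp : p ∈ stdSimplex ℝ Y)
    (hfg : ∀ y, |f y - g y| ≤ c) :
    |∑ y, p y * f y - ∑ y, p y * g y| ≤ c := by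
  rw [← sum_sub_distrib]
  calc |∑ y, (p y * f y - p y * g y)|
      ≤ ∑ y, p y * |f y - g y| := by
        refine (abs_sum_le_sum_abs _ _).trans_eq (sum_congr rfl fun y _ => ?_)
        rw [← mul_sub, abs_mul, abs_of_nonneg (hp.1 y)]
    _ ≤ ∑ y, p y * c := sum_le_sum fun y _ => mul_le_mul_of_nonneg_left (hfg y) (hp.1 y)
    _ = c := by rw [← sum_mul, hp.2, one_mul]

end Expectation

theorem Finset.filter_even_Icc_of_odd {a : ℕ} (ha : Odd a) (b : ℕ) :
    {j ∈ Icc a b | Even j} = {j ∈ Icc (a + 1) b | Even j} := by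
  ext j
  simp only [mem_filter, mem_Icc]
  constructor
  · rintro ⟨⟨haj, hjb⟩, hj⟩
    refine ⟨⟨lt_of_le_of_ne haj ?_, hjb⟩, hj⟩
    rintro rfl
    exact Nat.not_even_iff_odd.2 ha hj
  · rintro ⟨⟨haj, hjb⟩, hj⟩
    exact ⟨⟨by omega, hjb⟩, hj⟩

theorem Finset.sum_filter_even_Icc_of_even {M : Type*} [AddCommMonoid M] (f : ℕ → M) {a b : ℕ}
    (ha : Even a) (hab : a ≤ b) :
    ∑ j ∈ Icc a b with Even j, f j = f a + ∑ j ∈ Icc (a + 1) b with Even j, f j := by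
  rw [← insert_Icc_add_one_left_eq_Icc hab, filter_insert, if_pos ha,
    sum_insert (by simp)]

namespace gameValue

variable {Y : Type*} [Fintype Y] {H : ℕ} {r : (Fin H → Y) → ℝ}
  {π₁ π₂ : (k : ℕ) → (Fin k → Y) → Y → ℝ} {k : ℕ} {τ : Fin k → Y}

theorem of_lt (hk : k < H) :
    gameValue H r π₁ π₂ k τ =
      ∑ y, (if Even k then π₁ k τ y else π₂ k τ y) * gameValue H r π₁ π₂ (k + 1) (Fin.snoc τ y) := by
  rw [gameValue, dif_pos hk]

theorem of_le (hk : H ≤ k) :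
    gameValue H r π₁ π₂ k τ = r fun i => τ (Fin.castLE hk i) := by
  rw [gameValue, dif_neg (not_lt.2 hk)]

theorem of_even (hk : k < H) (he : Even k) :
    gameValue H r π₁ π₂ k τ = ∑ y, π₁ k τ y * gameValue H r π₁ π₂ (k + 1) (Fin.snoc τ y) := by
  simp only [of_lt hk, if_pos he]

theorem of_odd (hk : k < H) (ho : Odd k) :
    gameValue H r π₁ π₂ k τ = ∑ y, π₂ k τ y * gameValue H r π₁ π₂ (k + 1) (Fin.snoc τ y) := by
  simp only [of_lt hk, if_neg (Nat.not_even_iff_odd.2 ho)]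

end gameValue

section ErrorPropagation

variable {Y : Type*} [Fintype Y] {H : ℕ} {r : (Fin H → Y) → ℝ}
  {π₁ π₂ π₂' : (k : ℕ) → (Fin k → Y) → Y → ℝ}

theorem gameValue_mem_Icc (hr : ∀ τ, 0 ≤ r τ ∧ r τ ≤ 1)
    (hπ₁ : ∀ k, Even k → ∀ τ, π₁ k τ ∈ stdSimplex ℝ Y)
    (hπ₂ : ∀ k, Odd k → ∀ τ, π₂ k τ ∈ stdSimplex ℝ Y) (k : ℕ) (τ : Fin k → Y) :
    gameValue H r π₁ π₂ k τ ∈ Set.Icc 0 1 := by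
  by_cases hk : k < H
  · have hnext (y : Y) : gameValue H r π₁ π₂ (k + 1) (Fin.snoc τ y) ∈ Set.Icc 0 1 :=
      gameValue_mem_Icc hr hπ₁ hπ₂ (k + 1) (Fin.snoc τ y)
    have hp : (fun y => if Even k then π₁ k τ y else π₂ k τ y) ∈ stdSimplex ℝ Y := by
      by_cases he : Even k
      · simpa only [if_pos he] using hπ₁ k he τ
      · simpa only [if_neg he] using hπ₂ k (Nat.not_even_iff_odd.1 he) τ
    rw [gameValue.of_lt hk]
    constructor
    · exact sum_nonneg fun y _ => mul_nonneg (hp.1 y) (hnext y).1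
    · calc _ ≤ ∑ y, (if Even k then π₁ k τ y else π₂ k τ y) :=
            sum_le_sum fun y _ => mul_le_of_le_one_right (hp.1 y) (hnext y).2
        _ = 1 := hp.2
  · rw [gameValue.of_le (not_lt.1 hk)]
    exact hr _
termination_by H - k

theorem abs_gameValue_sub_le (hr : ∀ τ, 0 ≤ r τ ∧ r τ ≤ 1)
    (hπ₁ : ∀ k, Even k → ∀ τ, π₁ k τ ∈ stdSimplex ℝ Y)
    (hπ₂ : ∀ k, Odd k → ∀ τ, π₂ k τ ∈ stdSimplex ℝ Y)
    (hπ₂' : ∀ k, Odd k → ∀ τ, π₂' k τ ∈ stdSimplex ℝ Y) {ε : ℕ → ℝ}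
    (hTV : ∀ k < H, Odd k → ∀ τ : Fin k → Y, dTV (π₂ k τ) (π₂' k τ) ≤ ε (k + 1))
    (k : ℕ) (τ : Fin k → Y) :
    |gameValue H r π₁ π₂' k τ - gameValue H r π₁ π₂ k τ| ≤
      ∑ j ∈ Icc (k + 1) H with Even j, ε j := by
  by_cases hk : k < H
  · have hnext (y : Y) :
        |gameValue H r π₁ π₂' (k + 1) (Fin.snoc τ y) - gameValue H r π₁ π₂ (k + 1) (Fin.snoc τ y)|
          ≤ ∑ j ∈ Icc (k + 1 + 1) H with Even j, ε j :=
      abs_gameValue_sub_le hr hπ₁ hπ₂ hπ₂' hTV (k + 1) (Fin.snoc τ y)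
    rcases Nat.even_or_odd k with he | ho
    · rw [gameValue.of_even hk he, gameValue.of_even hk he,
        filter_even_Icc_of_odd he.add_one]
      exact abs_sum_mul_sub_sum_mul_le (hπ₁ k he τ) hnext
    · rw [gameValue.of_odd hk ho, gameValue.of_odd hk ho,
        sum_filter_even_Icc_of_even ε ho.add_one hk]
      refine (abs_sub_le _ (∑ y, π₂ k τ y * gameValue H r π₁ π₂' (k + 1) (Fin.snoc τ y)) _).trans
        (add_le_add ?_ (abs_sum_mul_sub_sum_mul_le (hπ₂ k ho τ) hnext))
      refine (abs_sum_mul_sub_sum_mul_le_dTV ?_ fun y => ?_).trans (hTV k hk ho τ)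
      · rw [(hπ₂ k ho τ).2, (hπ₂' k ho τ).2]
      · exact gameValue_mem_Icc hr hπ₁ hπ₂' (k + 1) (Fin.snoc τ y)
  · rw [gameValue.of_le (not_lt.1 hk), gameValue.of_le (not_lt.1 hk), sub_self, abs_zero,
      Icc_eq_empty_of_lt (by omega), filter_empty, sum_empty]
termination_by H - k

end ErrorPropagation

theorem value_error_propagation_general {Y : Type*} [Fintype Y] (H : ℕ)
    (r : (Fin H → Y) → ℝ) (hr : ∀ τ, 0 ≤ r τ ∧ r τ ≤ 1)
    (π₁ π₂ π₂' : (k : ℕ) → (Fin k → Y) → Y → ℝ)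
    (hπ₁ : ∀ k, Even k → ∀ τ : Fin k → Y, (∀ y, 0 ≤ π₁ k τ y) ∧ ∑ y, π₁ k τ y = 1)
    (hπ₂ : ∀ k, Odd k → ∀ τ : Fin k → Y, (∀ y, 0 ≤ π₂ k τ y) ∧ ∑ y, π₂ k τ y = 1)
    (hπ₂' : ∀ k, Odd k → ∀ τ : Fin k → Y, (∀ y, 0 ≤ π₂' k τ y) ∧ ∑ y, π₂' k τ y = 1)
    (ε : ℕ → ℝ)
    (hTV : ∀ h, 1 ≤ h → h ≤ H → Even h → ∀ τ : Fin (h - 1) → Y,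
      dTV (π₂ (h - 1) τ) (π₂' (h - 1) τ) ≤ ε h)
    (h : ℕ) (hodd : Odd h) (τ : Fin (h - 1) → Y) :
    |gameValue H r π₁ π₂' (h - 1) τ - gameValue H r π₁ π₂ (h - 1) τ| ≤
      ∑ k ∈ (Finset.Icc (h + 1) H).filter (fun k => Even k), ε k := by
  have hTV' : ∀ k < H, Odd k → ∀ τ : Fin k → Y, dTV (π₂ k τ) (π₂' k τ) ≤ ε (k + 1) :=
    fun k hk ho τ => hTV (k + 1) k.succ_pos hk ho.add_one τ
  have hbound := abs_gameValue_sub_le hr hπ₁ hπ₂ hπ₂' hTV' (h - 1) τ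
  rwa [Nat.sub_add_cancel hodd.pos, filter_even_Icc_of_odd hodd] at hbound

/-- Error propagation: if the two player-2 policies `π₂` and `π₂'` are `ε h`-close in total
variation at every even step `h ≤ H`, then for every player-1 policy `π₁`, every odd step
`h ≤ H` and every history `τ` of length `h − 1`, the corresponding values differ by at most the
sum of the per-step total-variation errors at the even steps `h+1, h+3, …` up to `H`. -/
theorem value_error_propagation {Y : Type*} [Fintype Y] [Nonempty Y] (H : ℕ)
    (r : (Fin H → Y) → ℝ) (hr : ∀ τ, 0 ≤ r τ ∧ r τ ≤ 1)
    (π₁ π₂ π₂' : (k : ℕ) → (Fin k → Y) → Y → ℝ)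
    (hπ₁ : ∀ k, Even k → ∀ τ : Fin k → Y, (∀ y, 0 ≤ π₁ k τ y) ∧ ∑ y, π₁ k τ y = 1)
    (hπ₂ : ∀ k, Odd k → ∀ τ : Fin k → Y, (∀ y, 0 ≤ π₂ k τ y) ∧ ∑ y, π₂ k τ y = 1)
    (hπ₂' : ∀ k, Odd k → ∀ τ : Fin k → Y, (∀ y, 0 ≤ π₂' k τ y) ∧ ∑ y, π₂' k τ y = 1)
    (ε : ℕ → ℝ) (hε : ∀ h, 0 ≤ ε h)
    (hTV : ∀ h, 1 ≤ h → h ≤ H → Even h → ∀ τ : Fin (h - 1) → Y,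
      dTV (π₂ (h - 1) τ) (π₂' (h - 1) τ) ≤ ε h)
    (h : ℕ) (hh1 : 1 ≤ h) (hhH : h ≤ H) (hodd : Odd h) (τ : Fin (h - 1) → Y) :
    |gameValue H r π₁ π₂' (h - 1) τ - gameValue H r π₁ π₂ (h - 1) τ| ≤
      ∑ k ∈ (Finset.Icc (h + 1) H).filter (fun k => Even k), ε k :=
  value_error_propagation_general H r hr π₁ π₂ π₂' hπ₁ hπ₂ hπ₂' ε hTV h hodd τ
end

section
/- For every probability mass function π on P × M there exists a payoff function ρ : P × M → [0,1] with max_{(p,m)} ρ(p,m) = 1 such that the expected payoff under π satisfies Σ_{(p,m)} π(p,m) · ρ(p,m) ≤ (max_{(p,m)} ρ(p,m)) / |M| = 1/|M|. In particular, no single mixed strategy over proposal–message pairs achieves more than a 1/|M| fraction of the optimal achievable payoff uniformly over all such payoff functions. -/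
/-!
The opponent rewards exactly the message that `π` plays least often. The marginals of `π` on `M`
sum to `1`, so the least of them is at most `1 / |M|`, and that marginal is `π`'s expected payoff.
-/

open Finset

theorem Fintype.exists_card_nsmul_le_sum {ι α : Type*} [Fintype ι] [Nonempty ι]
    [AddCommMonoid α] [LinearOrder α] [IsOrderedCancelAddMonoid α] (f : ι → α) :
    ∃ i, Fintype.card ι • f i ≤ ∑ j, f j := by
  obtain ⟨i, -, hi⟩ := exists_le_of_sum_le (s := univ) (f := fun i => Fintype.card ι • f i)
    (g := fun _ => ∑ j, f j) univ_nonempty (by simp [← smul_sum])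
  exact ⟨i, hi⟩

theorem sum_mul_ite_snd_eq {P M R : Type*} [Fintype P] [Fintype M] [DecidableEq M]
    [NonAssocSemiring R] (π : P × M → R) (m : M) :
    ∑ x, π x * (if x.2 = m then 1 else 0) = ∑ p, π (p, m) := by
  simp [Fintype.sum_prod_type]

theorem no_dominant_mixed_strategy_general {P M : Type*} [Fintype P] [Fintype M]
    [Nonempty P] [Nonempty M]
    (π : P × M → ℝ) (hπ1 : ∑ x, π x = 1) :
    ∃ ρ : P × M → ℝ,
      (∀ x, 0 ≤ ρ x ∧ ρ x ≤ 1) ∧ (∃ x, ρ x = 1) ∧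
      ∑ x, π x * ρ x ≤ 1 / (Fintype.card M : ℝ) := by
  classical
  obtain ⟨m, hm⟩ := Fintype.exists_card_nsmul_le_sum fun m => ∑ p, π (p, m)
  have hmarginals : ∑ m, ∑ p, π (p, m) = 1 := by
    rw [← hπ1, Fintype.sum_prod_type_right]
  refine ⟨fun x => if x.2 = m then 1 else 0, fun x => ?_,
    ⟨(Classical.arbitrary P, m), if_pos rfl⟩, ?_⟩
  · dsimp only; split_ifs <;> norm_num
  · rw [sum_mul_ite_snd_eq, le_div_iff₀ (by positivity), mul_comm, ← nsmul_eq_mul]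
    exact hm.trans hmarginals.le

/-- Non-dominance: for every mixed strategy `π` over proposal–message pairs `P × M`, there is a
payoff function `ρ : P × M → [0,1]` with maximum value `1` under which `π`'s expected payoff is
at most `1/|M|`, i.e. at most a `1/|M|` fraction of the optimal achievable payoff. -/
theorem no_dominant_mixed_strategy {P M : Type*} [Fintype P] [Fintype M]
    [Nonempty P] [Nonempty M]
    (π : P × M → ℝ) (hπ0 : ∀ x, 0 ≤ π x) (hπ1 : ∑ x, π x = 1) :
    ∃ ρ : P × M → ℝ,
      (∀ x, 0 ≤ ρ x ∧ ρ x ≤ 1) ∧ (∃ x, ρ x = 1) ∧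
      ∑ x, π x * ρ x ≤ 1 / (Fintype.card M : ℝ) :=
  no_dominant_mixed_strategy_general π hπ1
end
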